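/- For n = 1, let f be the function f = Σ_{n≥1} c_n (χ_{(a_n, a_n + 1/a_n)}/γ(a_n, a_n + 1/a_n) − χ_{(a_n', a_n' + 1/a_n')}/γ(a_n', a_n' + 1/a_n')), where (a_n), (a_n') are increasing sequences in (2, ∞) with a_n + 2/a_n < a_n', a_n' + 2/a_n' < a_{n+1} < 2a_n, and c_n > 0. Then E(f) := ∫₀^∞ x(|∫_x^∞ f dγ| + |∫_{−∞}^{−x} f dγ|) dx is finite if and only if Σ c_n a_n (a_n' − a_n) < ∞, up to two-sided constant bounds: there exist absolute constants c, C > 0 with c·Σ c_n a_n(a_n'−a_n) ≤ E(f) ≤ C·Σ c_n a_n(a_n'−a_n). -/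

import Mathlib

/-!
Write `I_k = (a_k, a_k + 1/a_k)` and `J_k = (a'_k, a'_k + 1/a'_k)`. The Gaussian tail
`F(x) = ∫_x^∞ f dγ` is the sum of the tails of the dipoles `c_k (χ_{I_k}/γ(I_k) - χ_{J_k}/γ(J_k))`
(the interchange is justified by `Σ c_k < ∞`). Each such tail vanishes off `(a_k, a'_k + 1/a'_k)`,
has absolute value at most `c_k`, and equals `-c_k` on the gap `[a_k + 1/a_k, a'_k]`; since these
windows are disjoint and `f = 0` on `(-∞, 0)`, `E(f)` lies between `Σ c_k ∫_{a_k+1/a_k}^{a'_k} x dx`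
and `Σ c_k ∫_{a_k}^{a'_k+1/a'_k} x dx`. Both are comparable to `Σ c_k a_k (a'_k - a_k)` because
`a_k (a'_k - a_k) > 2` and `a'_k < 2 a_k`.
-/

open MeasureTheory
open scoped ENNReal

/-- The Gauss measure on ℝ, with density `π^{-1/2} e^{-x²}`. -/
noncomputable def gauss1 : Measure ℝ :=
  volume.withDensity fun x => ENNReal.ofReal (Real.pi ^ (-(1 : ℝ) / 2) * Real.exp (-x ^ 2))

/-- `mrad t = min(1, 1/t)`, equal to `1` when `t ≤ 1`. -/
noncomputable def mrad (t : ℝ) : ℝ := if t ≤ 1 then 1 else 1 / t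

open Set Function

instance : IsFiniteMeasure gauss1 :=
  isFiniteMeasure_withDensity_ofReal <|
    ((by simpa using integrable_exp_neg_mul_sq one_pos : Integrable fun x : ℝ => Real.exp (-x ^ 2))
      |>.const_mul _).hasFiniteIntegral

instance : gauss1.IsOpenPosMeasure where
  open_pos U hU hne := by
    have hdens : {x : ℝ | ENNReal.ofReal (Real.pi ^ (-(1 : ℝ) / 2) * Real.exp (-x ^ 2)) ≠ 0}
        = univ :=
      eq_univ_of_forall fun x => by
        rw [mem_ofPred_eq, Ne, ENNReal.ofReal_eq_zero, not_le]
        positivity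
    rw [gauss1, Ne, withDensity_apply_eq_zero' (by fun_prop), hdens, univ_inter]
    exact hU.measure_ne_zero volume hne

section Dipole

variable {α : Type*} [MeasurableSpace α] {μ : Measure α} {s s' t : Set α}

noncomputable def normalizedIndicator (μ : Measure α) (s : Set α) (y : α) : ℝ :=
  s.indicator (fun _ => (1 : ℝ)) y / μ.real s

lemma normalizedIndicator_nonneg (y : α) : 0 ≤ normalizedIndicator μ s y :=
  div_nonneg (indicator_nonneg (fun _ _ => zero_le_one) y) measureReal_nonneg

lemma setIntegral_normalizedIndicator (hs : MeasurableSet s) (t : Set α) :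
    ∫ y in t, normalizedIndicator μ s y ∂μ = μ.real (t ∩ s) / μ.real s := by
  simp only [normalizedIndicator]
  rw [integral_div, setIntegral_indicator hs, setIntegral_const, smul_eq_mul, mul_one]

lemma setIntegral_normalizedIndicator_of_disjoint (hs : MeasurableSet s) (hst : Disjoint t s) :
    ∫ y in t, normalizedIndicator μ s y ∂μ = 0 := by
  rw [setIntegral_normalizedIndicator hs, hst.inter_eq, measureReal_empty, zero_div]

noncomputable def dipole (μ : Measure α) (c : ℝ) (s s' : Set α) (y : α) : ℝ :=
  c * (normalizedIndicator μ s y - normalizedIndicator μ s' y)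

variable [IsFiniteMeasure μ]

lemma integrable_normalizedIndicator (hs : MeasurableSet s) :
    Integrable (normalizedIndicator μ s) μ :=
  ((integrable_indicator_iff hs).2 (integrableOn_const (measure_ne_top μ s))).div_const _

lemma setIntegral_normalizedIndicator_mem_Icc (hs : MeasurableSet s) (t : Set α) :
    ∫ y in t, normalizedIndicator μ s y ∂μ ∈ Icc 0 1 := by
  rw [setIntegral_normalizedIndicator hs]
  exact ⟨by positivity, div_le_one_of_le₀ (measureReal_mono inter_subset_right) measureReal_nonneg⟩

lemma setIntegral_normalizedIndicator_of_subset (hs : MeasurableSet s) (hst : s ⊆ t)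
    (h0 : μ s ≠ 0) : ∫ y in t, normalizedIndicator μ s y ∂μ = 1 := by
  rw [setIntegral_normalizedIndicator hs, inter_eq_right.2 hst]
  exact div_self (ENNReal.toReal_ne_zero.2 ⟨h0, measure_ne_top μ s⟩)

lemma integrable_dipole (hs : MeasurableSet s) (hs' : MeasurableSet s') (c : ℝ) :
    Integrable (dipole μ c s s') μ :=
  ((integrable_normalizedIndicator hs).sub (integrable_normalizedIndicator hs')).const_mul c

lemma setIntegral_dipole (hs : MeasurableSet s) (hs' : MeasurableSet s') (c : ℝ) (t : Set α) :
    ∫ y in t, dipole μ c s s' y ∂μ =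
      c * (∫ y in t, normalizedIndicator μ s y ∂μ - ∫ y in t, normalizedIndicator μ s' y ∂μ) := by
  simp only [dipole]
  rw [integral_const_mul, integral_sub (integrable_normalizedIndicator hs).integrableOn
    (integrable_normalizedIndicator hs').integrableOn]

lemma abs_setIntegral_dipole_le (hs : MeasurableSet s) (hs' : MeasurableSet s') {c : ℝ}
    (hc : 0 ≤ c) (t : Set α) : |∫ y in t, dipole μ c s s' y ∂μ| ≤ c := by
  rw [setIntegral_dipole hs hs', abs_mul, abs_of_nonneg hc]
  obtain ⟨h₀, h₁⟩ := setIntegral_normalizedIndicator_mem_Icc (μ := μ) hs t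
  obtain ⟨h₀', h₁'⟩ := setIntegral_normalizedIndicator_mem_Icc (μ := μ) hs' t
  exact mul_le_of_le_one_right hc (abs_sub_le_iff.2 ⟨by linarith, by linarith⟩)

lemma setIntegral_norm_dipole_le (hs : MeasurableSet s) (hs' : MeasurableSet s') {c : ℝ}
    (hc : 0 ≤ c) (t : Set α) : ∫ y in t, ‖dipole μ c s s' y‖ ∂μ ≤ 2 * c := by
  have hint := ((integrable_normalizedIndicator (μ := μ) hs).const_mul c).integrableOn (s := t)
  have hint' := ((integrable_normalizedIndicator (μ := μ) hs').const_mul c).integrableOn (s := t)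
  have hpt : ∀ y, ‖dipole μ c s s' y‖ ≤
      c * normalizedIndicator μ s y + c * normalizedIndicator μ s' y := fun y => by
    rw [dipole, Real.norm_eq_abs, abs_mul, abs_of_nonneg hc, ← mul_add]
    have := normalizedIndicator_nonneg (μ := μ) (s := s) y
    have := normalizedIndicator_nonneg (μ := μ) (s := s') y
    exact mul_le_mul_of_nonneg_left (abs_sub_le_iff.2 ⟨by linarith, by linarith⟩) hc
  calc ∫ y in t, ‖dipole μ c s s' y‖ ∂μ
      ≤ ∫ y in t, (c * normalizedIndicator μ s y + c * normalizedIndicator μ s' y) ∂μ :=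
        integral_mono (integrable_dipole hs hs' c).integrableOn.norm (hint.add hint') hpt
    _ ≤ c * 1 + c * 1 := by
        rw [integral_add hint hint', integral_const_mul, integral_const_mul]
        gcongr
        · exact (setIntegral_normalizedIndicator_mem_Icc hs t).2
        · exact (setIntegral_normalizedIndicator_mem_Icc hs' t).2
    _ = 2 * c := by ring

lemma setIntegral_dipole_of_subset (hs : MeasurableSet s) (hs' : MeasurableSet s') (c : ℝ)
    (hst : s ⊆ t) (hs't : s' ⊆ t) (h0 : μ s ≠ 0) (h0' : μ s' ≠ 0) :
    ∫ y in t, dipole μ c s s' y ∂μ = 0 := by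
  rw [setIntegral_dipole hs hs', setIntegral_normalizedIndicator_of_subset hs hst h0,
    setIntegral_normalizedIndicator_of_subset hs' hs't h0', sub_self, mul_zero]

lemma setIntegral_dipole_of_disjoint (hs : MeasurableSet s) (hs' : MeasurableSet s') (c : ℝ)
    (hst : Disjoint t s) (hs't : Disjoint t s') : ∫ y in t, dipole μ c s s' y ∂μ = 0 := by
  rw [setIntegral_dipole hs hs', setIntegral_normalizedIndicator_of_disjoint hs hst,
    setIntegral_normalizedIndicator_of_disjoint hs' hs't, sub_self, mul_zero]

lemma setIntegral_dipole_of_disjoint_of_subset (hs : MeasurableSet s) (hs' : MeasurableSet s')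
    (c : ℝ) (hst : Disjoint t s) (hs't : s' ⊆ t) (h0' : μ s' ≠ 0) :
    ∫ y in t, dipole μ c s s' y ∂μ = -c := by
  rw [setIntegral_dipole hs hs', setIntegral_normalizedIndicator_of_disjoint hs hst,
    setIntegral_normalizedIndicator_of_subset hs' hs't h0']
  ring

lemma setIntegral_tsum_dipole {c : ℕ → ℝ} {s s' : ℕ → Set α} (hc : ∀ k, 0 ≤ c k)
    (hsum : Summable c) (hs : ∀ k, MeasurableSet (s k)) (hs' : ∀ k, MeasurableSet (s' k))
    (t : Set α) :
    ∫ y in t, ∑' k, dipole μ (c k) (s k) (s' k) y ∂μ =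
      ∑' k, ∫ y in t, dipole μ (c k) (s k) (s' k) y ∂μ :=
  (integral_tsum_of_summable_integral_norm
    (fun k => (integrable_dipole (hs k) (hs' k) (c k)).integrableOn)
    (Summable.of_nonneg_of_le (fun _ => integral_nonneg fun _ => norm_nonneg _)
      (fun k => setIntegral_norm_dipole_le (hs k) (hs' k) (hc k) t) (hsum.mul_left 2))).symm

end Dipole

structure IntervalChain (p q p' q' : ℕ → ℝ) : Prop where
  lt_q : ∀ k, p k < q k
  q_le_p' : ∀ k, q k ≤ p' k
  p'_lt_q' : ∀ k, p' k < q' k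
  q'_le_p_succ : ∀ k, q' k ≤ p (k + 1)

noncomputable def dipoleSeries (μ : Measure ℝ) (c p q p' q' : ℕ → ℝ) (y : ℝ) : ℝ :=
  ∑' k, dipole μ (c k) (Ioo (p k) (q k)) (Ioo (p' k) (q' k)) y

lemma setIntegral_dipoleSeries {μ : Measure ℝ} [IsFiniteMeasure μ] {c : ℕ → ℝ}
    (p q p' q' : ℕ → ℝ) (hc : ∀ k, 0 ≤ c k) (hsum : Summable c) (t : Set ℝ) :
    ∫ y in t, dipoleSeries μ c p q p' q' y ∂μ =
      ∑' k, ∫ y in t, dipole μ (c k) (Ioo (p k) (q k)) (Ioo (p' k) (q' k)) y ∂μ :=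
  setIntegral_tsum_dipole hc hsum (fun _ => measurableSet_Ioo) (fun _ => measurableSet_Ioo) t

namespace IntervalChain

variable {p q p' q' : ℕ → ℝ}

lemma p_lt_q' (h : IntervalChain p q p' q') (k : ℕ) : p k < q' k :=
  ((h.lt_q k).trans_le (h.q_le_p' k)).trans (h.p'_lt_q' k)

lemma strictMono_p (h : IntervalChain p q p' q') : StrictMono p :=
  strictMono_nat_of_lt_succ fun k => (h.p_lt_q' k).trans_le (h.q'_le_p_succ k)

lemma p_zero_le (h : IntervalChain p q p' q') (k : ℕ) : p 0 ≤ p k :=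
  h.strictMono_p.monotone k.zero_le

lemma q'_le_p (h : IntervalChain p q p' q') {k m : ℕ} (hkm : k < m) : q' k ≤ p m :=
  (h.q'_le_p_succ k).trans (h.strictMono_p.monotone hkm)

lemma pairwise_disjoint_Ioo (h : IntervalChain p q p' q') :
    Pairwise (Disjoint on fun k => Ioo (p k) (q' k)) := by
  have key : ∀ k m, k < m → Disjoint (Ioo (p k) (q' k)) (Ioo (p m) (q' m)) := fun k m hkm =>
    disjoint_left.2 fun x hx hx' => (h.q'_le_p hkm).not_gt (hx'.1.trans hx.2)
  intro k m hkm
  rcases hkm.lt_or_gt with hlt | hlt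
  · exact key k m hlt
  · exact (key m k hlt).symm

lemma pairwise_disjoint_Ioo_q_p' (h : IntervalChain p q p' q') :
    Pairwise (Disjoint on fun k => Ioo (q k) (p' k)) :=
  h.pairwise_disjoint_Ioo.mono fun k m hkm =>
    hkm.mono (Ioo_subset_Ioo (h.lt_q k).le (h.p'_lt_q' k).le)
      (Ioo_subset_Ioo (h.lt_q m).le (h.p'_lt_q' m).le)

variable {μ : Measure ℝ} [IsFiniteMeasure μ] {c : ℕ → ℝ}

lemma setIntegral_Iio_dipoleSeries_eq_zero (h : IntervalChain p q p' q') (hc : ∀ k, 0 ≤ c k)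
    (hsum : Summable c) {x : ℝ} (hx : x ≤ p 0) :
    ∫ y in Iio x, dipoleSeries μ c p q p' q' y ∂μ = 0 := by
  have hle : ∀ k, x ≤ p k := fun k => hx.trans (h.p_zero_le k)
  rw [setIntegral_dipoleSeries p q p' q' hc hsum]
  refine (tsum_congr fun k => setIntegral_dipole_of_disjoint measurableSet_Ioo measurableSet_Ioo _
    ?_ ?_).trans tsum_zero
  · exact disjoint_left.2 fun y hy hy' => hy'.1.not_ge (hy.le.trans (hle k))
  · exact disjoint_left.2 fun y hy hy' =>
      hy'.1.not_ge (hy.le.trans ((hle k).trans ((h.lt_q k).le.trans (h.q_le_p' k))))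

variable [μ.IsOpenPosMeasure]

lemma setIntegral_Ioi_dipole_eq_zero (h : IntervalChain p q p' q') (k : ℕ) {x : ℝ}
    (hx : x ∉ Ioo (p k) (q' k)) :
    ∫ y in Ioi x, dipole μ (c k) (Ioo (p k) (q k)) (Ioo (p' k) (q' k)) y ∂μ = 0 := by
  rcases not_and_or.1 hx with hx | hx <;> rw [not_lt] at hx
  · exact setIntegral_dipole_of_subset measurableSet_Ioo measurableSet_Ioo _
      (fun y hy => hx.trans_lt hy.1)
      (fun y hy => (hx.trans ((h.lt_q k).le.trans (h.q_le_p' k))).trans_lt hy.1)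
      (isOpen_Ioo.measure_ne_zero μ (nonempty_Ioo.2 (h.lt_q k)))
      (isOpen_Ioo.measure_ne_zero μ (nonempty_Ioo.2 (h.p'_lt_q' k)))
  · exact setIntegral_dipole_of_disjoint measurableSet_Ioo measurableSet_Ioo _
      (disjoint_left.2 fun y hy hy' =>
        hy'.2.not_ge (((h.q_le_p' k).trans (h.p'_lt_q' k).le).trans (hx.trans hy.le)))
      (disjoint_left.2 fun y hy hy' => hy'.2.not_ge (hx.trans hy.le))

lemma setIntegral_Ioi_dipole_eq_neg (h : IntervalChain p q p' q') (k : ℕ) {x : ℝ}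
    (hx : x ∈ Icc (q k) (p' k)) :
    ∫ y in Ioi x, dipole μ (c k) (Ioo (p k) (q k)) (Ioo (p' k) (q' k)) y ∂μ = -c k :=
  setIntegral_dipole_of_disjoint_of_subset measurableSet_Ioo measurableSet_Ioo _
    (disjoint_left.2 fun _ hy hy' => hy'.2.not_ge (hx.1.trans hy.le))
    (fun _ hy => hx.2.trans_lt hy.1)
    (isOpen_Ioo.measure_ne_zero μ (nonempty_Ioo.2 (h.p'_lt_q' k)))

lemma setIntegral_Ioi_dipoleSeries_of_mem_Icc (h : IntervalChain p q p' q')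
    (hc : ∀ k, 0 ≤ c k) (hsum : Summable c) {n : ℕ} {x : ℝ} (hx : x ∈ Icc (q n) (p' n)) :
    ∫ y in Ioi x, dipoleSeries μ c p q p' q' y ∂μ = -c n := by
  have hxn : x ∈ Ioo (p n) (q' n) := ⟨(h.lt_q n).trans_le hx.1, hx.2.trans_lt (h.p'_lt_q' n)⟩
  rw [setIntegral_dipoleSeries p q p' q' hc hsum,
    tsum_eq_single n fun k hk => h.setIntegral_Ioi_dipole_eq_zero k
      fun hxk => (h.pairwise_disjoint_Ioo hk).ne_of_mem hxk hxn rfl]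
  exact h.setIntegral_Ioi_dipole_eq_neg n hx

lemma abs_setIntegral_Ioi_dipoleSeries_le (h : IntervalChain p q p' q') (hc : ∀ k, 0 ≤ c k)
    (hsum : Summable c) (x : ℝ) :
    |∫ y in Ioi x, dipoleSeries μ c p q p' q' y ∂μ| ≤
      ∑' k, (Ioo (p k) (q' k)).indicator (fun _ => c k) x := by
  rw [setIntegral_dipoleSeries p q p' q' hc hsum]
  have hterm : ∀ k, |∫ y in Ioi x, dipole μ (c k) (Ioo (p k) (q k)) (Ioo (p' k) (q' k)) y ∂μ| ≤
      (Ioo (p k) (q' k)).indicator (fun _ => c k) x := fun k => by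
    by_cases hx : x ∈ Ioo (p k) (q' k)
    · rw [indicator_of_mem hx]
      exact abs_setIntegral_dipole_le measurableSet_Ioo measurableSet_Ioo (hc k) _
    · rw [indicator_of_notMem hx, h.setIntegral_Ioi_dipole_eq_zero k hx, abs_zero]
  have hind : Summable fun k => (Ioo (p k) (q' k)).indicator (fun _ => c k) x :=
    hsum.of_nonneg_of_le (fun k => indicator_nonneg (fun _ _ => hc k) x)
      (fun k => indicator_le_self' (fun _ _ => hc k) x)
  have hnorm : Summable fun k =>
      ‖∫ y in Ioi x, dipole μ (c k) (Ioo (p k) (q k)) (Ioo (p' k) (q' k)) y ∂μ‖ :=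
    hind.of_nonneg_of_le (fun _ => norm_nonneg _) fun k => (Real.norm_eq_abs _).trans_le (hterm k)
  refine (Real.norm_eq_abs _).symm.trans_le ((norm_tsum_le_tsum_norm hnorm).trans ?_)
  exact hnorm.tsum_le_tsum (fun k => (Real.norm_eq_abs _).trans_le (hterm k)) hind

end IntervalChain

lemma lintegral_Ioo_ofReal_const_mul {c l r : ℝ} (hc : 0 ≤ c) (hl : 0 ≤ l) (hlr : l ≤ r) :
    ∫⁻ x in Ioo l r, ENNReal.ofReal (c * x) = ENNReal.ofReal (c * (r ^ 2 - l ^ 2) / 2) := by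
  have hint : IntegrableOn (fun x => c * x) (Ioo l r) :=
    (continuous_const.mul continuous_id).integrableOn_Icc.mono_set Ioo_subset_Icc_self
  have hnn : 0 ≤ᵐ[volume.restrict (Ioo l r)] fun x => c * x :=
    (ae_restrict_iff' measurableSet_Ioo).2
      (Filter.Eventually.of_forall fun x hx => mul_nonneg hc (hl.trans hx.1.le))
  rw [← ofReal_integral_eq_lintegral_ofReal hint hnn, ← integral_Ioc_eq_integral_Ioo,
    ← intervalIntegral.integral_of_le hlr, intervalIntegral.integral_const_mul, integral_id]
  congr 1
  ring

section Energy

variable {T : ℝ → ℝ} {c l r : ℕ → ℝ}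

lemma tsum_le_setLIntegral_Ioi_of_abs_eq (hc : ∀ n, 0 ≤ c n) (hl : ∀ n, 0 ≤ l n)
    (hlr : ∀ n, l n ≤ r n) (hdisj : Pairwise (Disjoint on fun n => Ioo (l n) (r n)))
    (hT : ∀ n, ∀ x ∈ Ioo (l n) (r n), |T x| = c n) :
    ∑' n, ENNReal.ofReal (c n * (r n ^ 2 - l n ^ 2) / 2) ≤
      ∫⁻ x in Ioi 0, ENNReal.ofReal (x * |T x|) :=
  calc ∑' n, ENNReal.ofReal (c n * (r n ^ 2 - l n ^ 2) / 2)
      = ∑' n, ∫⁻ x in Ioo (l n) (r n), ENNReal.ofReal (x * |T x|) := tsum_congr fun n => by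
        rw [← lintegral_Ioo_ofReal_const_mul (hc n) (hl n) (hlr n)]
        exact setLIntegral_congr_fun measurableSet_Ioo fun x hx => by rw [hT n x hx, mul_comm]
    _ = ∫⁻ x in ⋃ n, Ioo (l n) (r n), ENNReal.ofReal (x * |T x|) :=
        (lintegral_iUnion (fun _ => measurableSet_Ioo) hdisj _).symm
    _ ≤ ∫⁻ x in Ioi 0, ENNReal.ofReal (x * |T x|) :=
        lintegral_mono_set (iUnion_subset fun n _ hx => (hl n).trans_lt hx.1)

lemma setLIntegral_Ioi_le_tsum_of_abs_le (hc : ∀ n, 0 ≤ c n) (hsum : Summable c)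
    (hl : ∀ n, 0 ≤ l n) (hlr : ∀ n, l n ≤ r n)
    (hT : ∀ x, |T x| ≤ ∑' n, (Ioo (l n) (r n)).indicator (fun _ => c n) x) :
    ∫⁻ x in Ioi 0, ENNReal.ofReal (x * |T x|) ≤
      ∑' n, ENNReal.ofReal (c n * (r n ^ 2 - l n ^ 2) / 2) := by
  have hpt : ∀ x ∈ Ioi (0 : ℝ), ENNReal.ofReal (x * |T x|) ≤
      ∑' n, (Ioo (l n) (r n)).indicator (fun x => ENNReal.ofReal (c n * x)) x := by
    intro x hx
    have hind : Summable fun n => (Ioo (l n) (r n)).indicator (fun _ => c n) x :=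
      hsum.of_nonneg_of_le (fun n => indicator_nonneg (fun _ _ => hc n) x)
        (fun n => indicator_le_self' (fun _ _ => hc n) x)
    calc ENNReal.ofReal (x * |T x|)
        ≤ ENNReal.ofReal (∑' n, x * (Ioo (l n) (r n)).indicator (fun _ => c n) x) := by
          rw [tsum_mul_left]
          exact ENNReal.ofReal_le_ofReal (mul_le_mul_of_nonneg_left (hT x) (le_of_lt hx))
      _ = ∑' n, ENNReal.ofReal (x * (Ioo (l n) (r n)).indicator (fun _ => c n) x) :=
          ENNReal.ofReal_tsum_of_nonneg
            (fun n => mul_nonneg (le_of_lt hx) (indicator_nonneg (fun _ _ => hc n) x))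
            (hind.mul_left x)
      _ = ∑' n, (Ioo (l n) (r n)).indicator (fun x => ENNReal.ofReal (c n * x)) x :=
          tsum_congr fun n => by
            by_cases hxn : x ∈ Ioo (l n) (r n)
            · rw [indicator_of_mem hxn, indicator_of_mem hxn, mul_comm]
            · rw [indicator_of_notMem hxn, indicator_of_notMem hxn, mul_zero,
                ENNReal.ofReal_zero]
  calc ∫⁻ x in Ioi 0, ENNReal.ofReal (x * |T x|)
      ≤ ∫⁻ x, ∑' n, (Ioo (l n) (r n)).indicator (fun x => ENNReal.ofReal (c n * x)) x :=
        (setLIntegral_mono' measurableSet_Ioi hpt).trans (setLIntegral_le_lintegral _ _)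
    _ = ∑' n, ∫⁻ x, (Ioo (l n) (r n)).indicator (fun x => ENNReal.ofReal (c n * x)) x :=
        lintegral_tsum fun n => ((measurable_const.mul measurable_id).ennreal_ofReal.indicator
          measurableSet_Ioo).aemeasurable
    _ = ∑' n, ENNReal.ofReal (c n * (r n ^ 2 - l n ^ 2) / 2) := tsum_congr fun n => by
        rw [lintegral_indicator measurableSet_Ioo,
          lintegral_Ioo_ofReal_const_mul (hc n) (hl n) (hlr n)]

end Energy

noncomputable def tailEnergy (μ : Measure ℝ) (f : ℝ → ℝ) : ℝ≥0∞ :=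
  ∫⁻ x in Ioi 0, ENNReal.ofReal (x * (|∫ y in Ioi x, f y ∂μ| + |∫ y in Iio (-x), f y ∂μ|))

namespace IntervalChain

variable {p q p' q' c : ℕ → ℝ} {μ : Measure ℝ} [IsFiniteMeasure μ]

lemma tailEnergy_dipoleSeries (h : IntervalChain p q p' q') (hp : 0 ≤ p 0) (hc : ∀ k, 0 ≤ c k)
    (hsum : Summable c) :
    tailEnergy μ (dipoleSeries μ c p q p' q') =
      ∫⁻ x in Ioi 0, ENNReal.ofReal (x * |∫ y in Ioi x, dipoleSeries μ c p q p' q' y ∂μ|) :=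
  setLIntegral_congr_fun measurableSet_Ioi fun x hx => by
    rw [h.setIntegral_Iio_dipoleSeries_eq_zero hc hsum ((neg_nonpos.2 (le_of_lt hx)).trans hp),
      abs_zero, add_zero]

variable [μ.IsOpenPosMeasure]

lemma tsum_le_tailEnergy_dipoleSeries (h : IntervalChain p q p' q') (hp : 0 ≤ p 0)
    (hc : ∀ k, 0 ≤ c k) (hsum : Summable c) :
    ∑' k, ENNReal.ofReal (c k * (p' k ^ 2 - q k ^ 2) / 2) ≤
      tailEnergy μ (dipoleSeries μ c p q p' q') := by
  rw [h.tailEnergy_dipoleSeries hp hc hsum]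
  refine tsum_le_setLIntegral_Ioi_of_abs_eq hc
    (fun k => (hp.trans (h.p_zero_le k)).trans (h.lt_q k).le) h.q_le_p'
    h.pairwise_disjoint_Ioo_q_p' fun k x hx => ?_
  rw [h.setIntegral_Ioi_dipoleSeries_of_mem_Icc hc hsum (Ioo_subset_Icc_self hx), abs_neg,
    abs_of_nonneg (hc k)]

lemma tailEnergy_dipoleSeries_le_tsum (h : IntervalChain p q p' q') (hp : 0 ≤ p 0)
    (hc : ∀ k, 0 ≤ c k) (hsum : Summable c) :
    tailEnergy μ (dipoleSeries μ c p q p' q') ≤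
      ∑' k, ENNReal.ofReal (c k * (q' k ^ 2 - p k ^ 2) / 2) := by
  rw [h.tailEnergy_dipoleSeries hp hc hsum]
  exact setLIntegral_Ioi_le_tsum_of_abs_le hc hsum (fun k => hp.trans (h.p_zero_le k))
    (fun k => (h.p_lt_q' k).le) (h.abs_setIntegral_Ioi_dipoleSeries_le hc hsum)

end IntervalChain

section Gaps

variable {a a' : ℝ}

lemma add_one_div_lt_of_add_two_div_lt (ha : 0 < a) (hgap : a + 2 / a < a') :
    a + 1 / a < a' := by
  linarith [one_div_pos.2 ha, show 2 / a = 1 / a + 1 / a by ring]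

lemma two_lt_mul_sub_of_add_two_div_lt (ha : 0 < a) (hgap : a + 2 / a < a') :
    2 < a * (a' - a) := by
  have h := mul_lt_mul_of_pos_left (show 2 / a < a' - a by linarith) ha
  rwa [mul_div_cancel₀ _ ha.ne'] at h

lemma mul_sub_le_sq_sub_sq_add_inv (ha : 0 < a) (hgap : a + 2 / a < a') :
    a * (a' - a) ≤ a' ^ 2 - (a + 1 / a) ^ 2 := by
  have had := two_lt_mul_sub_of_add_two_div_lt ha hgap
  have hinv : a * (1 / a) = 1 := mul_one_div_cancel ha.ne'
  have hd : 1 / a < a' - a := by linarith [show 2 / a = 2 * (1 / a) by ring, one_div_pos.2 ha]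
  nlinarith [mul_lt_mul_of_pos_left hd (one_div_pos.2 ha)]

lemma sq_add_inv_sub_sq_le (ha : 0 < a) (hgap : a + 2 / a < a') (ha' : a' < 2 * a) :
    (a' + 1 / a') ^ 2 - a ^ 2 ≤ 6 * (a * (a' - a)) := by
  have had := two_lt_mul_sub_of_add_two_div_lt ha hgap
  have h2a : 0 < 2 / a := by positivity
  have hj : 1 / a' < 1 / 2 := one_div_lt_one_div_of_lt two_pos (by nlinarith)
  have hj0 : 0 < 1 / a' := one_div_pos.2 (by linarith)
  have haa : a' * (1 / a') = 1 := mul_one_div_cancel (by linarith)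
  have hsum : (a' - a) * (a' + a) < (a' - a) * (3 * a) :=
    mul_lt_mul_of_pos_left (by linarith) (by linarith)
  nlinarith

end Gaps

lemma intervalChain_of_add_two_div_lt {a a' : ℕ → ℝ} (ha : ∀ k, 0 < a k)
    (hgap : ∀ k, a k + 2 / a k < a' k) (hgap' : ∀ k, a' k + 2 / a' k < a (k + 1)) :
    IntervalChain a (fun k => a k + 1 / a k) a' (fun k => a' k + 1 / a' k) :=
  have hq k : a k < a k + 1 / a k := lt_add_of_pos_right _ (one_div_pos.2 (ha k))
  have ha' k : 0 < a' k :=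
    (ha k).trans ((hq k).trans (add_one_div_lt_of_add_two_div_lt (ha k) (hgap k)))
  { lt_q := hq
    q_le_p' := fun k => (add_one_div_lt_of_add_two_div_lt (ha k) (hgap k)).le
    p'_lt_q' := fun k => lt_add_of_pos_right _ (one_div_pos.2 (ha' k))
    q'_le_p_succ := fun k => (add_one_div_lt_of_add_two_div_lt (ha' k) (hgap' k)).le }

theorem stmt_11 :
    ∃ c > 0, ∃ C > 0, ∀ (a a' cf : ℕ → ℝ) (f : ℝ → ℝ),
      (∀ k, 2 < a k) → StrictMono a → StrictMono a' →
      (∀ k, a k + 2 / a k < a' k) →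
      (∀ k, a' k + 2 / a' k < a (k + 1)) →
      (∀ k, a (k + 1) < 2 * a k) →
      (∀ k, 0 < cf k) → Summable cf →
      (f = fun x => ∑' k, cf k *
          ((Set.Ioo (a k) (a k + 1 / a k)).indicator (fun _ => (1 : ℝ)) x /
              (gauss1 (Set.Ioo (a k) (a k + 1 / a k))).toReal -
            (Set.Ioo (a' k) (a' k + 1 / a' k)).indicator (fun _ => (1 : ℝ)) x /
              (gauss1 (Set.Ioo (a' k) (a' k + 1 / a' k))).toReal)) →
      ENNReal.ofReal c * ∑' k, ENNReal.ofReal (cf k * a k * (a' k - a k)) ≤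
          (∫⁻ x in Set.Ioi (0 : ℝ), ENNReal.ofReal (x *
            (|∫ y in Set.Ioi x, f y ∂gauss1| + |∫ y in Set.Iio (-x), f y ∂gauss1|))) ∧
        (∫⁻ x in Set.Ioi (0 : ℝ), ENNReal.ofReal (x *
            (|∫ y in Set.Ioi x, f y ∂gauss1| + |∫ y in Set.Iio (-x), f y ∂gauss1|))) ≤
          ENNReal.ofReal C * ∑' k, ENNReal.ofReal (cf k * a k * (a' k - a k)) := by
  refine ⟨1 / 2, by norm_num, 3, by norm_num, ?_⟩
  intro a a' cf f ha _ _ hgap hgap' hgrow hcf hsum hf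
  have ha0 : ∀ k, 0 < a k := fun k => two_pos.trans (ha k)
  have hc : ∀ k, 0 ≤ cf k := fun k => (hcf k).le
  have hch := intervalChain_of_add_two_div_lt ha0 hgap hgap'
  replace hf : f = dipoleSeries gauss1 cf a _ a' _ := hf
  subst hf
  change _ ≤ tailEnergy gauss1 _ ∧ tailEnergy gauss1 _ ≤ _
  rw [← ENNReal.tsum_mul_left, ← ENNReal.tsum_mul_left]
  constructor
  · refine le_trans (ENNReal.tsum_le_tsum fun k => ?_)
      (hch.tsum_le_tailEnergy_dipoleSeries (ha0 0).le hc hsum)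
    rw [← ENNReal.ofReal_mul (by norm_num)]
    refine ENNReal.ofReal_le_ofReal ?_
    nlinarith [mul_le_mul_of_nonneg_left (mul_sub_le_sq_sub_sq_add_inv (ha0 k) (hgap k)) (hc k)]
  · refine (hch.tailEnergy_dipoleSeries_le_tsum (ha0 0).le hc hsum).trans
      (ENNReal.tsum_le_tsum fun k => ?_)
    rw [← ENNReal.ofReal_mul (by norm_num)]
    refine ENNReal.ofReal_le_ofReal ?_
    have ha' : a' k < 2 * a k := ((hch.p'_lt_q' k).trans_le (hch.q'_le_p_succ k)).trans (hgrow k)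
    nlinarith [mul_le_mul_of_nonneg_left (sq_add_inv_sub_sq_le (ha0 k) (hgap k) ha') (hc k)]
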